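/- The extended interferometer map sending |t'ᵢ⟩ to (1/2)(|sᵢ⟩ − e^{iφ}|s_{i+1}⟩ + i|dᵢ⟩ + i e^{iφ}|d_{i+1}⟩) is an isometry on the span of {|t'ᵢ⟩ : i ∈ ℤ}; that is, for all i, j ∈ ℤ, the inner product of the images of |t'ᵢ⟩ and |t'ⱼ⟩ equals δ_{ij}. -/
import Mathlib


open Complex

/-- Amplitude at output mode `m` (`false` = straight arm `s`, `true` = down arm
`d`; integer time index) of the extended interferometer with phase `φ` applied
to a single photon entering at input time mode `t'ᵢ`:
`|t'ᵢ⟩ ↦ (1/2)(|sᵢ⟩ − e^{iφ}|s_{i+1}⟩ + i|dᵢ⟩ + i e^{iφ}|d_{i+1}⟩)`. -/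
noncomputable def ampU (φ : ℝ) (i : ℤ) : Bool × ℤ → ℂ := fun m =>
  if m.1 then
    (I / 2) * ((if m.2 = i then 1 else 0)
      + Complex.exp (φ * I) * (if m.2 = i + 1 then 1 else 0))
  else
    (1 / 2) * ((if m.2 = i then 1 else 0)
      - Complex.exp (φ * I) * (if m.2 = i + 1 then 1 else 0))

lemma ampU_eq_zero (φ : ℝ) (i : ℤ) (m : Bool × ℤ) (h1 : m.2 ≠ i) (h2 : m.2 ≠ i + 1) :
    ampU φ i m = 0 := by
  simp [ampU, h1, h2]

lemma conj_exp_mul (φ : ℝ) :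
    starRingEnd ℂ (Complex.exp (φ * I)) * Complex.exp (φ * I) = 1 := by
  rw [← Complex.exp_conj, ← Complex.exp_add]
  simp

/-- The images of the input time modes `|t'ᵢ⟩` under the extended interferometer
form an orthonormal family: `⟨v_i, v_j⟩ = δ_{ij}`, so the map extends to an
isometry on the span of `{|t'ᵢ⟩ : i ∈ ℤ}`. -/
theorem stmt17 (φ : ℝ) (i j : ℤ) :
    ∑ᶠ m : Bool × ℤ, starRingEnd ℂ (ampU φ i m) * ampU φ j m
      = if i = j then 1 else 0 := by
  have he := conj_exp_mul φ
  rcases eq_or_ne i j with rfl | hij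
  · -- diagonal case
    have hsub : (Function.support fun m : Bool × ℤ =>
        starRingEnd ℂ (ampU φ i m) * ampU φ i m)
        ⊆ ((Finset.univ ×ˢ ({i, i + 1} : Finset ℤ) : Finset (Bool × ℤ)) : Set (Bool × ℤ)) := by
      intro m hm
      simp only [Function.mem_support, ne_eq] at hm
      by_contra h
      simp only [Finset.coe_product, Finset.coe_univ, Set.mem_prod, Set.mem_univ, true_and,
        Finset.coe_insert, Finset.coe_singleton, Set.mem_insert_iff, Set.mem_singleton_iff,
        not_or] at h
      exact hm (by rw [ampU_eq_zero φ i m h.1 h.2, map_zero, zero_mul])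
    rw [finsum_eq_sum_of_support_subset _ hsub, Finset.sum_product]
    have hne : i ≠ i + 1 := by omega
    simp only [Fintype.sum_bool, Finset.sum_pair hne, if_pos rfl]
    simp only [ampU, if_pos rfl, if_neg hne, if_neg (Ne.symm hne), if_true,
      Bool.false_eq_true, if_false]
    simp only [mul_zero, add_zero, zero_add, mul_one, sub_zero, zero_sub, map_mul, map_div₀,
      Complex.conj_I, map_one, map_ofNat, map_neg]
    linear_combination (1/2 : ℂ) * he +
      (-(1/4:ℂ) - (starRingEnd ℂ (Complex.exp (φ * I)) * Complex.exp (φ * I))/4) * Complex.I_sq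
  · rw [if_neg hij]
    rcases eq_or_ne j (i + 1) with rfl | hj1
    · -- adjacent case j = i + 1
      have hsub : (Function.support fun m : Bool × ℤ =>
          starRingEnd ℂ (ampU φ i m) * ampU φ (i + 1) m)
          ⊆ ((Finset.univ ×ˢ ({i + 1} : Finset ℤ) : Finset (Bool × ℤ)) : Set (Bool × ℤ)) := by
        intro m hm
        simp only [Function.mem_support, ne_eq] at hm
        by_contra h
        simp only [Finset.coe_product, Finset.coe_univ, Set.mem_prod, Set.mem_univ, true_and,
          Finset.coe_singleton, Set.mem_singleton_iff] at h
        rcases eq_or_ne m.2 i with h2 | h2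
        · exact hm (by rw [ampU_eq_zero φ (i + 1) m (by omega) (by omega), mul_zero])
        · exact hm (by rw [ampU_eq_zero φ i m h2 h, map_zero, zero_mul])
      rw [finsum_eq_sum_of_support_subset _ hsub, Finset.sum_product]
      simp only [Fintype.sum_bool, Finset.sum_singleton]
      simp only [ampU, if_pos rfl, if_neg (show (i + 1 : ℤ) ≠ i by omega),
        if_neg (show (i + 1 : ℤ) ≠ i + 1 + 1 by omega), if_true, Bool.false_eq_true, if_false]
      simp only [mul_zero, add_zero, zero_add, mul_one, sub_zero, zero_sub, map_mul, map_div₀,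
        Complex.conj_I, map_one, map_ofNat, map_neg]
      linear_combination (-(starRingEnd ℂ (Complex.exp (φ * I)))/4) * Complex.I_sq
    · rcases eq_or_ne i (j + 1) with rfl | hi1
      · -- adjacent case i = j + 1
        have hsub : (Function.support fun m : Bool × ℤ =>
            starRingEnd ℂ (ampU φ (j + 1) m) * ampU φ j m)
            ⊆ ((Finset.univ ×ˢ ({j + 1} : Finset ℤ) : Finset (Bool × ℤ)) : Set (Bool × ℤ)) := by
          intro m hm
          simp only [Function.mem_support, ne_eq] at hm
          by_contra h
          simp only [Finset.coe_product, Finset.coe_univ, Set.mem_prod, Set.mem_univ, true_and,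
            Finset.coe_singleton, Set.mem_singleton_iff] at h
          rcases eq_or_ne m.2 j with h2 | h2
          · exact hm (by rw [ampU_eq_zero φ (j + 1) m (by omega) (by omega), map_zero, zero_mul])
          · exact hm (by rw [ampU_eq_zero φ j m h2 h, mul_zero])
        rw [finsum_eq_sum_of_support_subset _ hsub, Finset.sum_product]
        simp only [Fintype.sum_bool, Finset.sum_singleton]
        simp only [ampU, if_pos rfl, if_neg (show (j + 1 : ℤ) ≠ j by omega),
          if_neg (show (j + 1 : ℤ) ≠ j + 1 + 1 by omega), if_true, Bool.false_eq_true, if_false]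
        simp only [mul_zero, add_zero, zero_add, mul_one, sub_zero, zero_sub, map_mul, map_div₀,
          Complex.conj_I, map_one, map_ofNat, map_neg]
        linear_combination (-(Complex.exp (φ * I))/4) * Complex.I_sq
      · -- far case: pointwise zero
        have hz : (fun m : Bool × ℤ => starRingEnd ℂ (ampU φ i m) * ampU φ j m)
            = fun _ => 0 := by
          funext m
          rcases eq_or_ne m.2 i with h | h
          · rw [ampU_eq_zero φ j m (by omega) (by omega), mul_zero]
          · rcases eq_or_ne m.2 (i + 1) with h' | h'
            · rw [ampU_eq_zero φ j m (by omega) (by omega), mul_zero]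
            · rw [ampU_eq_zero φ i m h h', map_zero, zero_mul]
        rw [hz]
        exact finsum_zero
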